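/- For every t ≥ 1 one has v^δ_{1,t} = Σ_{k=1}^N ρ_k^{-1} 𝒯_t(λ_k), where δ=(1,0,0,…); moreover, for every T ≥ 1, the T×T connecting matrix C^T_N = (W^T_N)ᵀ W^T_N, where W^T_N:ℝ^T→ℝ^N maps f=(f_0,…,f_{T−1}) to (v^f_{1,T},…,v^f_{N,T}), has entries (C^T_N)_{l+1,m+1} = Σ_{k=1}^N ρ_k^{-1} 𝒯_{T−l}(λ_k) 𝒯_{T−m}(λ_k) for 0 ≤ l,m ≤ T−1. -/

import Mathlib

open scoped BigOperators
open Matrix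

/-- Chebyshev polynomials of the second kind (paper normalization). -/
def chebU (x : ℝ) : ℕ → ℝ
  | 0 => 0
  | 1 => 1
  | t + 2 => x * chebU x (t + 1) - chebU x t

/-- Solution `v^f` of the finite system of size `N` (Dirichlet condition at `n = N+1`). -/
def solF (N : ℕ) (a b f : ℕ → ℝ) : ℕ → ℕ → ℝ
  | n, 0 => if n = 0 then f 0 else 0
  | n, 1 =>
      if n = 0 then f 1
      else if N < n then 0
      else a n * solF N a b f (n + 1) 0 + a (n - 1) * solF N a b f (n - 1) 0
        + b n * solF N a b f n 0
  | n, t + 2 =>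
      if n = 0 then f (t + 2)
      else if N < n then 0
      else a n * solF N a b f (n + 1) (t + 1) + a (n - 1) * solF N a b f (n - 1) (t + 1)
        + b n * solF N a b f n (t + 1) - solF N a b f n t
  termination_by n t => t

/-- `φ_n(λ)`. -/
noncomputable def phiP (a b : ℕ → ℝ) : ℕ → ℝ → ℝ
  | 0, _ => 0
  | 1, _ => 1
  | n + 2, x => ((x - b (n + 1)) * phiP a b (n + 1) x - a n * phiP a b n x) / a (n + 1)

/-- The control `δ = (1,0,0,…)`. -/
def dctrl : ℕ → ℝ := fun t => if t = 0 then 1 else 0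

/-- Extension of a finite control `f = (f_0,…,f_{T-1})` by zero. -/
def ctrl (T : ℕ) (f : Fin T → ℝ) : ℕ → ℝ := fun t => if h : t < T then f ⟨t, h⟩ else 0

/-- The control operator `W^T_N : ℝ^T → ℝ^N`, `f ↦ (v^f_{1,T},…,v^f_{N,T})`, as a matrix. -/
def WFinMat (N : ℕ) (a b : ℕ → ℝ) (T : ℕ) : Matrix (Fin N) (Fin T) ℝ :=
  Matrix.of fun n j => solF N a b (ctrl T (fun k => if k = j then 1 else 0)) ((n : ℕ) + 1) T

/-- Connecting operator `C^T_N = (W^T_N)ᵀ W^T_N`. -/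
def CFinMat (N : ℕ) (a b : ℕ → ℝ) (T : ℕ) : Matrix (Fin T) (Fin T) ℝ :=
  (WFinMat N a b T)ᵀ * WFinMat N a b T

/-!
The eigenvectors `φ^k` are orthogonal by the Christoffel–Darboux identity, so the matrix `Φ`
with rows `φ^k` satisfies `Φ Φᵀ = diag ρ` and hence, being square, `Φᵀ diag ρ⁻¹ Φ = 1`. The
latter gives `Σ_k ρ_k⁻¹ φ_n(λ_k) 𝒯_t(λ_k)` the initial data of `v^δ_{n,t}`; it obeys the same
recursion in `t` because `φ(λ_k)` is an eigenvector and `𝒯` obeys the Chebyshev recursion, so it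
is `v^δ`. The response to the unit control at time `j` is `v^δ` delayed by `j`, whence
`W = Φᵀ diag ρ⁻¹ U` with `U_{k,j} = 𝒯_{T-j}(λ_k)` and
`C = Uᵀ diag ρ⁻¹ (Φ Φᵀ) diag ρ⁻¹ U = Uᵀ diag ρ⁻¹ U`.
-/

section Response

variable {N : ℕ} {a b f : ℕ → ℝ}

theorem solF_zero_left (t : ℕ) : solF N a b f 0 t = f t := by
  rcases t with _ | _ | t <;> simp [solF]

theorem solF_of_lt {n : ℕ} (t : ℕ) (h : N < n) : solF N a b f n t = 0 := by
  have hn : n ≠ 0 := by omega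
  rcases t with _ | _ | t <;> simp [solF, hn, h]

theorem solF_zero_right {n : ℕ} (hn : n ≠ 0) : solF N a b f n 0 = 0 := by
  simp [solF, hn]

theorem solF_one {n : ℕ} (hn : n ≠ 0) (hnN : n ≤ N) :
    solF N a b f n 1 = if n = 1 then a 0 * f 0 else 0 := by
  rw [solF, if_neg hn, if_neg (by omega), solF_zero_right (by omega), solF_zero_right hn, solF]
  by_cases h1 : n = 1 <;> simp [h1, show n - 1 = 0 ↔ n = 1 by omega]

theorem solF_add_two {n : ℕ} (t : ℕ) (hn : n ≠ 0) (hnN : n ≤ N) :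
    solF N a b f n (t + 2) = a n * solF N a b f (n + 1) (t + 1)
      + a (n - 1) * solF N a b f (n - 1) (t + 1) + b n * solF N a b f n (t + 1)
      - solF N a b f n t := by
  rw [solF, if_neg hn, if_neg (by omega)]

-- `u 0 0` is left free: the spectral representation vanishes there although `δ_0 = 1`.
theorem solF_eq_of_recurrence (u : ℕ → ℕ → ℝ)
    (h_left : ∀ t, u 0 (t + 1) = f (t + 1))
    (h_right : ∀ t, u (N + 1) t = 0)
    (h_zero : ∀ n, 1 ≤ n → n ≤ N → u n 0 = 0)
    (h_one : ∀ n, 1 ≤ n → n ≤ N → u n 1 = if n = 1 then a 0 * f 0 else 0)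
    (h_step : ∀ n t, 1 ≤ n → n ≤ N → u n (t + 2) = a n * u (n + 1) (t + 1)
      + a (n - 1) * u (n - 1) (t + 1) + b n * u n (t + 1) - u n t)
    {n t : ℕ} (hn : 1 ≤ n) (hnN : n ≤ N + 1) : solF N a b f n t = u n t := by
  let Agree (t : ℕ) := ∀ n, 1 ≤ n → n ≤ N + 1 → solF N a b f n t = u n t
  suffices ∀ t, Agree t ∧ Agree (t + 1) from (this t).1 n hn hnN
  have at_right : ∀ t, solF N a b f (N + 1) t = u (N + 1) t := fun t => by
    rw [solF_of_lt t (Nat.lt_succ_self N), h_right]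
  intro t
  induction t with
  | zero =>
    refine ⟨fun n hn hnN => ?_, fun n hn hnN => ?_⟩ <;>
      rcases Nat.lt_or_eq_of_le hnN with hnN | rfl
    · rw [solF_zero_right (by omega), h_zero n hn (by omega)]
    · exact at_right 0
    · rw [solF_one (by omega) (by omega), h_one n hn (by omega)]
    · exact at_right 1
  | succ t ih =>
    refine ⟨ih.2, fun n hn hnN => ?_⟩
    rcases Nat.lt_or_eq_of_le hnN with hnN | rfl
    · have below : solF N a b f (n - 1) (t + 1) = u (n - 1) (t + 1) := by
        rcases Nat.lt_or_eq_of_le hn with hn' | rfl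
        · exact ih.2 _ (by omega) (by omega)
        · rw [solF_zero_left, h_left]
      rw [solF_add_two t (by omega) (by omega), h_step n t hn (by omega), below,
        ih.2 (n + 1) (by omega) (by omega), ih.2 n hn (by omega), ih.1 n hn (by omega)]
    · exact at_right _

theorem solF_one_of_eq_zero (hf : f 0 = 0) {n : ℕ} (hn : n ≠ 0) : solF N a b f n 1 = 0 := by
  rcases le_or_gt n N with hnN | hnN
  · rw [solF_one hn hnN, hf, mul_zero, ite_self]
  · exact solF_of_lt 1 hnN

theorem solF_add_one_of_eq_zero (hf : f 0 = 0) (t : ℕ) {n : ℕ} (hn : 1 ≤ n) (hnN : n ≤ N + 1) :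
    solF N a b f n (t + 1) = solF N a b (fun s => f (s + 1)) n t := by
  refine (solF_eq_of_recurrence (fun n t => solF N a b f n (t + 1))
    (fun t => solF_zero_left _) (fun t => solF_of_lt _ (by omega))
    (fun n hn _ => solF_one_of_eq_zero hf (by omega)) (fun n hn hnN => ?_)
    (fun n t hn hnN => solF_add_two _ (by omega) hnN) hn hnN).symm
  rw [solF_add_two 0 (by omega) hnN, solF_one_of_eq_zero (n := n + 1) hf (by omega),
    solF_one_of_eq_zero (n := n) hf (by omega), solF_zero_right (by omega)]
  rcases Nat.lt_or_eq_of_le hn with hn' | rfl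
  · simp [solF_one_of_eq_zero (n := n - 1) hf (by omega), show n ≠ 1 by omega]
  · simp [solF_zero_left]

theorem solF_add_of_eq_zero {j : ℕ} (hf : ∀ s < j, f s = 0) (t : ℕ) {n : ℕ} (hn : 1 ≤ n)
    (hnN : n ≤ N + 1) : solF N a b f n (t + j) = solF N a b (fun s => f (s + j)) n t := by
  induction j generalizing f with
  | zero => rfl
  | succ j ih =>
    rw [← add_assoc, solF_add_one_of_eq_zero (hf 0 (by omega)) _ hn hnN,
      ih (fun s hs => hf (s + 1) (by omega))]
    simp only [add_assoc]

end Response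

theorem solF_ctrl_single {N T n : ℕ} {a b : ℕ → ℝ} (j : Fin T) (hn : 1 ≤ n) (hnN : n ≤ N + 1) :
    solF N a b (ctrl T (fun k => if k = j then 1 else 0)) n T = solF N a b dctrl n (T - j) := by
  have hzero : ∀ s < (j : ℕ), ctrl T (fun k => if k = j then 1 else 0) s = 0 := by
    intro s hs
    simp [ctrl, Fin.ext_iff, hs.ne]
  have hshift : (fun s => ctrl T (fun k => if k = j then (1 : ℝ) else 0) (s + j)) = dctrl := by
    funext s
    have := j.isLt
    simp [ctrl, dctrl, Fin.ext_iff]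
    omega
  rw [← hshift, ← solF_add_of_eq_zero hzero _ hn hnN, Nat.sub_add_cancel j.isLt.le]

section Orthogonality

variable {a b : ℕ → ℝ}

theorem phiP_recurrence {m : ℕ} (ha : a (m + 1) ≠ 0) (x : ℝ) :
    a (m + 1) * phiP a b (m + 2) x + a m * phiP a b m x + b (m + 1) * phiP a b (m + 1) x
      = x * phiP a b (m + 1) x := by
  rw [phiP]
  field_simp
  ring

theorem christoffel_darboux (ha : ∀ n, a (n + 1) ≠ 0) (x y : ℝ) (n : ℕ) :
    (x - y) * ∑ i ∈ Finset.range n, phiP a b (i + 1) x * phiP a b (i + 1) y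
      = a n * (phiP a b (n + 1) x * phiP a b n y - phiP a b n x * phiP a b (n + 1) y) := by
  induction n with
  | zero => simp [phiP]
  | succ n ih =>
    rw [Finset.sum_range_succ, mul_add, ih]
    linear_combination phiP a b (n + 1) x * phiP_recurrence (b := b) (ha n) y
      - phiP a b (n + 1) y * phiP_recurrence (b := b) (ha n) x

theorem sum_phiP_mul_phiP_eq_zero (ha : ∀ n, a (n + 1) ≠ 0) {N : ℕ} {x y : ℝ} (hxy : x ≠ y)
    (hx : phiP a b (N + 1) x = 0) (hy : phiP a b (N + 1) y = 0) :
    ∑ i ∈ Finset.range N, phiP a b (i + 1) x * phiP a b (i + 1) y = 0 := by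
  have h := christoffel_darboux (b := b) ha x y N
  rw [hx, hy, zero_mul, mul_zero, sub_zero, mul_zero] at h
  exact (mul_eq_zero.1 h).resolve_left (sub_ne_zero.2 hxy)

end Orthogonality

theorem Matrix.transpose_mul_diagonal_inv_mul_self {n K : Type*} [Fintype n] [DecidableEq n]
    [Field K] {A : Matrix n n K} {d : n → K} (hA : A * Aᵀ = diagonal d) (hd : ∀ i, d i ≠ 0) :
    Aᵀ * diagonal d⁻¹ * A = 1 := by
  refine mul_eq_one_comm.1 ?_
  rw [← Matrix.mul_assoc, hA, diagonal_mul_diagonal, ← diagonal_one]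
  exact congrArg diagonal (funext fun i => mul_inv_cancel₀ (hd i))

section Spectral

variable {N : ℕ} {a b : ℕ → ℝ} {lam rho : Fin N → ℝ}

noncomputable def eigenvectorMatrix (a b : ℕ → ℝ) (lam : Fin N → ℝ) : Matrix (Fin N) (Fin N) ℝ :=
  Matrix.of fun k i => phiP a b (i + 1) (lam k)

theorem rho_eq_sum_fin (hrho : ∀ k, rho k = ∑ i ∈ Finset.Icc 1 N, (phiP a b i (lam k)) ^ 2)
    (k : Fin N) : rho k = ∑ i : Fin N, phiP a b (i + 1) (lam k) ^ 2 := by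
  rw [hrho k, ← Finset.Ico_add_one_right_eq_Icc, Finset.sum_Ico_eq_sum_range,
    ← Fin.sum_univ_eq_sum_range (fun i => phiP a b (1 + i) (lam k) ^ 2), Nat.add_sub_cancel]
  simp only [add_comm 1]

theorem rho_pos (hrho : ∀ k, rho k = ∑ i ∈ Finset.Icc 1 N, (phiP a b i (lam k)) ^ 2)
    (k : Fin N) : 0 < rho k := by
  rw [rho_eq_sum_fin hrho k]
  calc (0 : ℝ) < phiP a b ((⟨0, k.pos⟩ : Fin N) + 1) (lam k) ^ 2 := by simp [phiP]
    _ ≤ _ := Finset.single_le_sum (f := fun i : Fin N => phiP a b (i + 1) (lam k) ^ 2)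
      (fun i _ => sq_nonneg _) (Finset.mem_univ _)

variable (ha : ∀ n, a (n + 1) ≠ 0) (hinj : Function.Injective lam)
  (hroot : ∀ k, phiP a b (N + 1) (lam k) = 0)
  (hrho : ∀ k, rho k = ∑ i ∈ Finset.Icc 1 N, (phiP a b i (lam k)) ^ 2)
include ha hinj hroot hrho

theorem eigenvectorMatrix_mul_transpose :
    eigenvectorMatrix a b lam * (eigenvectorMatrix a b lam)ᵀ = diagonal rho := by
  ext k l
  rw [mul_apply, diagonal_apply]
  simp only [eigenvectorMatrix, transpose_apply, of_apply]
  split_ifs with hkl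
  · simp [hkl, rho_eq_sum_fin hrho l, sq]
  · rw [Fin.sum_univ_eq_sum_range (fun i => phiP a b (i + 1) (lam k) * phiP a b (i + 1) (lam l))]
    exact sum_phiP_mul_phiP_eq_zero ha (hinj.ne hkl) (hroot k) (hroot l)

theorem sum_inv_rho_mul_phiP {n : ℕ} (hn : 1 ≤ n) (hnN : n ≤ N) :
    ∑ k, (rho k)⁻¹ * phiP a b n (lam k) = if n = 1 then 1 else 0 := by
  have h := congrFun (congrFun (transpose_mul_diagonal_inv_mul_self
    (eigenvectorMatrix_mul_transpose ha hinj hroot hrho) fun k => (rho_pos hrho k).ne')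
    ⟨n - 1, by omega⟩) ⟨0, by omega⟩
  rw [mul_apply] at h
  simp only [mul_diagonal, eigenvectorMatrix, transpose_apply, of_apply, one_apply, Fin.ext_iff,
    Nat.sub_add_cancel hn] at h
  simpa [phiP, mul_comm, show n - 1 = 0 ↔ n = 1 by omega] using h

theorem solF_dctrl_eq_sum (ha0 : a 0 = 1) {n : ℕ} (t : ℕ) (hn : 1 ≤ n) (hnN : n ≤ N + 1) :
    solF N a b dctrl n t = ∑ k, (rho k)⁻¹ * phiP a b n (lam k) * chebU (lam k) t := by
  refine solF_eq_of_recurrence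
    (fun n t => ∑ k, (rho k)⁻¹ * phiP a b n (lam k) * chebU (lam k) t)
    (by simp [phiP, dctrl]) (by simp [hroot]) (by simp [chebU])
    (fun n hn hnN => ?_) (fun n t hn hnN => ?_) hn hnN
  · simp only [chebU, mul_one, sum_inv_rho_mul_phiP ha hinj hroot hrho hn hnN, dctrl, ha0]
    simp
  · obtain ⟨m, rfl⟩ : ∃ m, n = m + 1 := ⟨n - 1, by omega⟩
    simp only [Nat.add_sub_cancel, Finset.mul_sum, ← Finset.sum_add_distrib,
      ← Finset.sum_sub_distrib]
    refine Finset.sum_congr rfl fun k _ => ?_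
    rw [chebU]
    linear_combination
      -(rho k)⁻¹ * chebU (lam k) (t + 1) * phiP_recurrence (b := b) (ha m) (lam k)

theorem WFinMat_eq (ha0 : a 0 = 1) (T : ℕ) :
    WFinMat N a b T = (eigenvectorMatrix a b lam)ᵀ * diagonal rho⁻¹
      * of fun k (j : Fin T) => chebU (lam k) (T - j) := by
  ext n j
  rw [WFinMat, of_apply, solF_ctrl_single j (by omega) (by omega),
    solF_dctrl_eq_sum ha hinj hroot hrho ha0 _ (by omega) (by omega), mul_apply]
  simp [eigenvectorMatrix, mul_comm]

theorem CFinMat_eq (ha0 : a 0 = 1) (T : ℕ) :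
    CFinMat N a b T = (of fun k (j : Fin T) => chebU (lam k) (T - j))ᵀ * diagonal rho⁻¹
      * of fun k (j : Fin T) => chebU (lam k) (T - j) := by
  have hD : diagonal rho⁻¹ * diagonal rho * diagonal rho⁻¹ = diagonal rho⁻¹ := by
    rw [diagonal_mul_diagonal, diagonal_mul_diagonal]
    exact congrArg diagonal (funext fun k => by
      rw [Pi.inv_apply, inv_mul_cancel₀ (rho_pos hrho k).ne', one_mul])
  rw [CFinMat, WFinMat_eq ha hinj hroot hrho ha0, transpose_mul, transpose_mul,
    transpose_transpose, diagonal_transpose]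
  simp only [Matrix.mul_assoc]
  rw [← Matrix.mul_assoc (eigenvectorMatrix a b lam),
    eigenvectorMatrix_mul_transpose ha hinj hroot hrho]
  simp only [← Matrix.mul_assoc, hD]

end Spectral

theorem finite_response_and_connecting_spectral_representation_general
    (N : ℕ) (a b : ℕ → ℝ) (ha0 : a 0 = 1) (hapos : ∀ n, 0 < a n)
    (lam : Fin N → ℝ) (hinj : Function.Injective lam)
    (hroot : ∀ k, phiP a b (N + 1) (lam k) = 0)
    (rho : Fin N → ℝ)
    (hrho : ∀ k, rho k = ∑ i ∈ Finset.Icc 1 N, (phiP a b i (lam k)) ^ 2) :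
    (∀ t : ℕ, 1 ≤ t →
        solF N a b dctrl 1 t = ∑ k : Fin N, (rho k)⁻¹ * chebU (lam k) t) ∧
    (∀ T : ℕ, 1 ≤ T → ∀ l m : Fin T,
        CFinMat N a b T l m
          = ∑ k : Fin N, (rho k)⁻¹ * chebU (lam k) (T - (l : ℕ)) * chebU (lam k) (T - (m : ℕ))) := by
  have ha : ∀ n, a (n + 1) ≠ 0 := fun n => (hapos (n + 1)).ne'
  refine ⟨fun t _ => ?_, fun T _ l m => ?_⟩
  · simpa [phiP] using solF_dctrl_eq_sum ha hinj hroot hrho ha0 t le_rfl (by omega)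
  · rw [CFinMat_eq ha hinj hroot hrho ha0, mul_apply]
    simp [mul_diagonal, mul_comm]

/-- spectral representations of the response vector
`v^δ_{1,t} = Σ_k ρ_k⁻¹ 𝒯_t(λ_k)` and of the entries of the connecting operator
`(C^T_N)_{l+1,m+1} = Σ_k ρ_k⁻¹ 𝒯_{T-l}(λ_k) 𝒯_{T-m}(λ_k)`. -/
theorem finite_response_and_connecting_spectral_representation
    (N : ℕ) (hN : 1 ≤ N) (a b : ℕ → ℝ) (ha0 : a 0 = 1) (hapos : ∀ n, 0 < a n)
    (lam : Fin N → ℝ) (hinj : Function.Injective lam)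
    (hroot : ∀ k, phiP a b (N + 1) (lam k) = 0)
    (rho : Fin N → ℝ)
    (hrho : ∀ k, rho k = ∑ i ∈ Finset.Icc 1 N, (phiP a b i (lam k)) ^ 2) :
    (∀ t : ℕ, 1 ≤ t →
        solF N a b dctrl 1 t = ∑ k : Fin N, (rho k)⁻¹ * chebU (lam k) t) ∧
    (∀ T : ℕ, 1 ≤ T → ∀ l m : Fin T,
        CFinMat N a b T l m
          = ∑ k : Fin N, (rho k)⁻¹ * chebU (lam k) (T - (l : ℕ)) * chebU (lam k) (T - (m : ℕ))) :=
  finite_response_and_connecting_spectral_representation_general N a b ha0 hapos lam hinj hroot rho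
    hrho
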